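/- Let 𝓟𝓘𝓟 be a PIPTA and consider a run in its parametric probabilistic zone graph reaching a symbolic state (ℓ, C). Let v be a parameter valuation. Then there exists an equivalent concrete run (with the same sequence of locations and edges) in v(𝓟𝓘𝓟) iff v satisfies C↓P, the projection of C onto the parameters. -/

import Mathlib

open scoped Classical

noncomputable section

/-! ### Basic relations -/

/-- Comparison relations `<, ≤, ≥, >` used in guards and zones. -/
inductive TRel : Type
  | lt | le | ge | gt
deriving DecidableEq

/-- Semantics of a comparison relation on reals. -/
def TRel.holds : TRel → ℝ → ℝ → Prop
  | .lt, a, b => a < b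
  | .le, a, b => a ≤ b
  | .ge, a, b => a ≥ b
  | .gt, a, b => a > b

/-! ### Distributions and interval distributions -/

/-- A finitely supported probability distribution over `S`. -/
structure FDist (S : Type*) where
  prob : S → ℝ
  nonneg : ∀ s, 0 ≤ prob s
  finsupp : (Function.support prob).Finite
  total : ∑ᶠ s, prob s = 1

/-- An interval distribution over `S`: each element gets a closed subinterval of `[0,1]`. -/
structure IntervalDist (S : Type*) where
  lo : S → ℝ
  hi : S → ℝ
  lo_nonneg : ∀ s, 0 ≤ lo s
  lo_le_hi : ∀ s, lo s ≤ hi s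
  hi_le_one : ∀ s, hi s ≤ 1

/-- A distribution implements an interval distribution iff each probability lies in
the corresponding interval. -/
def FDist.Matches {S : Type*} (μ : FDist S) (Υ : IntervalDist S) : Prop :=
  ∀ s, Υ.lo s ≤ μ.prob s ∧ μ.prob s ≤ Υ.hi s

/-- Feasible supports of an interval distribution. -/
def FS {S : Type*} (Υ : IntervalDist S) : Set (Set S) :=
  { T | ∃ μ : FDist S, μ.Matches Υ ∧ ∀ s, 0 < μ.prob s ↔ s ∈ T }

/-- Restriction of an interval distribution to a support: probabilities outside
the support are set to `[0,0]`. -/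
def IntervalDist.restrict {S : Type*} (Υ : IntervalDist S) (T : Set S) : IntervalDist S where
  lo := fun s => if s ∈ T then Υ.lo s else 0
  hi := fun s => if s ∈ T then Υ.hi s else 0
  lo_nonneg := by
    intro s; split
    · exact Υ.lo_nonneg s
    · exact le_rfl
  lo_le_hi := by
    intro s; split
    · exact Υ.lo_le_hi s
    · exact le_rfl
  hi_le_one := by
    intro s; split
    · exact Υ.hi_le_one s
    · exact zero_le_one

/-! ### IMDPs and MDPs -/

/-- An interval Markov decision process. -/
structure IMDP (S A : Type*) where
  init : S
  trans : Set (S × A × IntervalDist S)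

/-- A Markov decision process (with exact, finitely supported distributions). -/
structure MDP (S A : Type*) where
  init : S
  trans : Set (S × A × FDist S)

/-- Lifting (coupling) of a relation `R` to a distribution and an interval distribution. -/
def distLift {S' S : Type*} (R : Set (S' × S)) (ι : FDist S') (I : IntervalDist S) : Prop :=
  ∃ δ : FDist (S' × S),
    (∀ s', 0 < ι.prob s' → ∑ᶠ s, δ.prob (s', s) = 1) ∧
    (∀ s, I.lo s ≤ (∑ᶠ s', ι.prob s' * δ.prob (s', s)) ∧
      (∑ᶠ s', ι.prob s' * δ.prob (s', s)) ≤ I.hi s) ∧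
    (∀ s' s, 0 < δ.prob (s', s) → (s', s) ∈ R)

/-- An MDP implements an IMDP. -/
def MDP.Implements {S' S A : Type*} (M : MDP S' A) (IM : IMDP S A) : Prop :=
  ∃ R : Set (S' × S), (M.init, IM.init) ∈ R ∧
    ∀ s' s, (s', s) ∈ R →
      (∀ a ι, (s', a, ι) ∈ M.trans → ∃ I, (s, a, I) ∈ IM.trans ∧ distLift R ι I) ∧
      (∀ a I, (s, a, I) ∈ IM.trans → ∃ ι, (s', a, ι) ∈ M.trans ∧ distLift R ι I)

/-- An IMDP is consistent iff it admits at least one implementing MDP. -/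
def IMDP.Consistent {S A : Type*} (IM : IMDP S A) : Prop :=
  ∃ (S' : Type) (M : MDP S' A), M.Implements IM

/-- Reachable states of an MDP. -/
inductive MDP.Reach {S A : Type*} (M : MDP S A) : S → Prop
  | init : MDP.Reach M M.init
  | step {s a ι s'} : MDP.Reach M s → (s, a, ι) ∈ M.trans → 0 < ι.prob s' → MDP.Reach M s'

/-- Reachable states of an IMDP (an edge is possible if its upper probability is positive). -/
inductive IMDP.Reach {S A : Type*} (M : IMDP S A) : S → Prop
  | init : IMDP.Reach M M.init
  | step {s a I s'} : IMDP.Reach M s → (s, a, I) ∈ M.trans → 0 < I.hi s' → IMDP.Reach M s'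

/-- An MDP has the same structure as an IMDP: up to renaming (injectively on its
reachable part) and removal of unreachable states, its underlying directed graph is a
subgraph of the one of the IMDP. -/
def MDP.SameStructure {S' S A : Type*} (M : MDP S' A) (IM : IMDP S A) : Prop :=
  ∃ φ : S' → S, Set.InjOn φ { s | M.Reach s } ∧ φ M.init = IM.init ∧
    ∀ s₁ s₂ : S', M.Reach s₁ →
      (∃ a ι, (s₁, a, ι) ∈ M.trans ∧ 0 < ι.prob s₂) →
      ∃ a I, (φ s₁, a, I) ∈ IM.trans ∧ 0 < I.hi (φ s₂)

/-! ### Guards -/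

/-- An atomic (parametric) guard constraint `x ⋈ k` or `x ⋈ p`. -/
inductive GuardAtom (X P : Type*) : Type _
  | const (x : X) (r : TRel) (k : ℤ)
  | param (x : X) (r : TRel) (p : P)

/-- A guard is a (finite) conjunction of atomic constraints. -/
abbrev PGuard (X P : Type*) := List (GuardAtom X P)

/-- A valuated guard atom `x ⋈ q` with a rational constant. -/
inductive VGuardAtom (X : Type*) : Type _
  | atom (x : X) (r : TRel) (q : ℚ)

/-- A valuated guard. -/
abbrev VGuard (X : Type*) := List (VGuardAtom X)

/-- Valuating a guard atom with a (nonnegative rational) parameter valuation. -/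
def GuardAtom.val {X P : Type*} (v : P → NNRat) : GuardAtom X P → VGuardAtom X
  | .const x r k => .atom x r (k : ℚ)
  | .param x r p => .atom x r ((v p : ℚ))

/-- Satisfaction of a valuated guard atom by a clock valuation. -/
def VGuardAtom.sat {X : Type*} (w : X → ℝ) : VGuardAtom X → Prop
  | .atom x r q => r.holds (w x) (q : ℝ)

/-- Satisfaction of a valuated guard by a clock valuation. -/
def VGuard.sat {X : Type*} (w : X → ℝ) (g : VGuard X) : Prop :=
  ∀ c ∈ g, c.sat w

/-- A valuated guard is satisfiable iff some (nonnegative) clock valuation satisfies it. -/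
def VGuard.Satisfiable {X : Type*} (g : VGuard X) : Prop :=
  ∃ w : X → ℝ, (∀ x, 0 ≤ w x) ∧ VGuard.sat w g

/-! ### Zones (non-parametric syntactic guards) -/

/-- An atomic zone constraint: `x ⋈ k` or `x - y ⋈ k` with an integer `k`. -/
inductive ZoneAtom (X : Type*) : Type _
  | rect (x : X) (r : TRel) (k : ℤ)
  | diag (x y : X) (r : TRel) (k : ℤ)

/-- A zone: a conjunction of atomic zone constraints. -/
abbrev Zone (X : Type*) := List (ZoneAtom X)

/-- Satisfaction of an atomic zone constraint. -/
def ZoneAtom.sat {X : Type*} (w : X → ℝ) : ZoneAtom X → Prop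
  | .rect x r k => r.holds (w x) (k : ℝ)
  | .diag x y r k => r.holds (w x - w y) (k : ℝ)

/-- Satisfaction of a zone. -/
def Zone.sat {X : Type*} (w : X → ℝ) (g : Zone X) : Prop := ∀ c ∈ g, c.sat w

/-! ### (Interval) probabilistic timed automata, generic in the guard type `G` -/

/-- An interval probabilistic timed automaton with actions `A`, locations `L`, clocks `X`
and guards of type `G`. -/
structure IPTA (A L X G : Type*) where
  init : L
  edges : Set (L × G × A × IntervalDist (Finset X × L))

/-- A probabilistic timed automaton. -/
structure PTA (A L X G : Type*) where
  init : L
  edges : Set (L × G × A × FDist (Finset X × L))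

/-- The coupling-based lifting of a relation on locations to (interval) distributions
over (reset set, location) pairs. -/
def edistLift {L' L X : Type*} (R : Set (L' × L)) (υ : FDist (Finset X × L'))
    (Υ : IntervalDist (Finset X × L)) : Prop :=
  ∃ δ : FDist (L' × L),
    (∀ (ρ : Finset X) (m' : L'), 0 < υ.prob (ρ, m') → ∑ᶠ m : L, δ.prob (m', m) = 1) ∧
    (∀ (ρ : Finset X) (m : L),
      Υ.lo (ρ, m) ≤ (∑ᶠ m' : L', υ.prob (ρ, m') * δ.prob (m', m)) ∧
      (∑ᶠ m' : L', υ.prob (ρ, m') * δ.prob (m', m)) ≤ Υ.hi (ρ, m)) ∧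
    (∀ m' m, 0 < δ.prob (m', m) → (m', m) ∈ R)

/-- A PTA implements an IPTA (same actions, same clocks, same guards). -/
def PTA.Implements {A L' L X G : Type*} (T : PTA A L' X G) (IP : IPTA A L X G) : Prop :=
  ∃ R : Set (L' × L), (T.init, IP.init) ∈ R ∧
    ∀ l' l, (l', l) ∈ R →
      (∀ g a υ, (l', g, a, υ) ∈ T.edges → ∃ Υ, (l, g, a, Υ) ∈ IP.edges ∧ edistLift R υ Υ) ∧
      (∀ g a Υ, (l, g, a, Υ) ∈ IP.edges → ∃ υ, (l', g, a, υ) ∈ T.edges ∧ edistLift R υ Υ)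

/-- An IPTA is consistent iff it admits at least one implementing PTA. -/
def IPTA.Consistent {A L X G : Type*} (IP : IPTA A L X G) : Prop :=
  ∃ (L' : Type) (T : PTA A L' X G), T.Implements IP

/-! ### Parametric interval probabilistic timed automata -/

/-- A parametric interval probabilistic timed automaton. -/
structure PIPTA (A L X P : Type*) where
  init : L
  edges : Set (L × PGuard X P × A × IntervalDist (Finset X × L))

/-- The type of edges of a PIPTA. -/
abbrev EdgeT (A L X P : Type*) := L × PGuard X P × A × IntervalDist (Finset X × L)

/-- Valuation of a PIPTA: parameters are replaced by their (nonnegative rational) values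
and edges with unsatisfiable guards are removed. -/
def PIPTA.val {A L X P : Type*} (M : PIPTA A L X P) (v : P → NNRat) :
    IPTA A L X (VGuard X) where
  init := M.init
  edges := { e | ∃ l g a Υ, (l, g, a, Υ) ∈ M.edges ∧
      e = (l, g.map (GuardAtom.val v), a, Υ) ∧
      VGuard.Satisfiable (g.map (GuardAtom.val v)) }

/-- An atomic guard constraint respects a lower/upper partition of the parameters. -/
def GuardAtom.LURespects {X P : Type*} (isLower : P → Prop) : GuardAtom X P → Prop
  | .const _ _ _ => True
  | .param _ r p => (isLower p → r = .ge ∨ r = .gt) ∧ (¬ isLower p → r = .le ∨ r = .lt)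

/-- A PIPTA is L/U w.r.t. a partition of its parameters into lower-bound and
upper-bound parameters. -/
def PIPTA.IsLU {A L X P : Type*} (M : PIPTA A L X P) (isLower : P → Prop) : Prop :=
  ∀ e ∈ M.edges, ∀ c ∈ e.2.1, GuardAtom.LURespects isLower c

/-! ### Parametric (non-probabilistic) timed automata -/

/-- A parametric timed automaton (without invariants): transitions carry a guard,
an action, a set of clocks to reset, and a target location. -/
structure PPTA (A L X P : Type*) where
  init : L
  trans : Set (L × PGuard X P × A × Finset X × L)

/-- Reachability in the concrete semantics of a valuated parametric timed automaton. -/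
inductive PPTA.Reach {A L X P : Type*} [DecidableEq X] (T : PPTA A L X P) (v : P → NNRat) :
    L → (X → ℝ) → Prop
  | init : PPTA.Reach T v T.init (fun _ => 0)
  | step {l : L} {w : X → ℝ} {d : ℝ} {g : PGuard X P} {a : A} {ρ : Finset X} {l' : L} :
      PPTA.Reach T v l w →
      (l, g, a, ρ, l') ∈ T.trans →
      0 ≤ d →
      VGuard.sat (fun x => w x + d) (g.map (GuardAtom.val v)) →
      PPTA.Reach T v l' (fun x => if x ∈ ρ then 0 else w x + d)

/-- Runs of a valuated parametric timed automaton, represented by their sequence of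
delays and transitions, starting from a given configuration. -/
def PPTA.IsRunFrom {A L X P : Type*} [DecidableEq X] (T : PPTA A L X P) (v : P → NNRat) :
    L → (X → ℝ) → List (ℝ × (L × PGuard X P × A × Finset X × L)) → Prop
  | _, _, [] => True
  | l, w, (d, tr) :: rest =>
      0 ≤ d ∧ tr ∈ T.trans ∧ tr.1 = l ∧
      VGuard.sat (fun x => w x + d) (tr.2.1.map (GuardAtom.val v)) ∧
      PPTA.IsRunFrom T v tr.2.2.2.2 (fun x => if x ∈ tr.2.2.2.1 then 0 else w x + d) rest

/-- A run of a valuated parametric timed automaton (from the initial configuration). -/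
def PPTA.IsRun {A L X P : Type*} [DecidableEq X] (T : PPTA A L X P) (v : P → NNRat)
    (r : List (ℝ × (L × PGuard X P × A × Finset X × L))) : Prop :=
  T.IsRunFrom v T.init (fun _ => 0) r

/-- A PPTA is L/U w.r.t. a partition of its parameters. -/
def PPTA.IsLU {A L X P : Type*} (T : PPTA A L X P) (isLower : P → Prop) : Prop :=
  ∀ t ∈ T.trans, ∀ c ∈ t.2.1, GuardAtom.LURespects isLower c

/-! ### Concrete runs of PIPTAs -/

/-- Concrete runs of a valuated PIPTA along a list of (edge, reset set, target location)
choices: from configuration `(l, w)` to configuration `(lf, wf)`. Each step delays by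
some `d ≥ 0`, satisfies the (valuated) guard and takes a branch of positive possible
probability. -/
def PIPTA.ConcSteps {A L X P : Type*} [DecidableEq X] (M : PIPTA A L X P) (v : P → NNRat) :
    L → (X → ℝ) → List (EdgeT A L X P × Finset X × L) → L → (X → ℝ) → Prop
  | l, w, [], lf, wf => lf = l ∧ wf = w
  | l, w, (e, ρ, l') :: rest, lf, wf =>
      e ∈ M.edges ∧ e.1 = l ∧ 0 < e.2.2.2.hi (ρ, l') ∧
      ∃ d : ℝ, 0 ≤ d ∧ VGuard.sat (fun x => w x + d) (e.2.1.map (GuardAtom.val v)) ∧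
        PIPTA.ConcSteps M v l' (fun x => if x ∈ ρ then 0 else w x + d) rest lf wf

/-- A location is reachable in the concrete semantics of a valuated PIPTA. -/
def PIPTA.ReachLoc {A L X P : Type*} [DecidableEq X] (M : PIPTA A L X P) (v : P → NNRat)
    (l : L) : Prop :=
  ∃ tr w, M.ConcSteps v M.init (fun _ => 0) tr l w

/-! ### Zone graphs (semantic zones) -/

/-- Time elapsing of a (semantic) zone. -/
def elapse {X : Type*} (C : Set (X → ℝ)) : Set (X → ℝ) :=
  { w' | ∃ w ∈ C, ∃ d : ℝ, 0 ≤ d ∧ w' = fun x => w x + d }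

/-- Reset of a (semantic) zone. -/
def resetClocks {X : Type*} [DecidableEq X] (C : Set (X → ℝ)) (ρ : Finset X) :
    Set (X → ℝ) :=
  { w' | ∃ w ∈ C, w' = fun x => if x ∈ ρ then 0 else w x }

/-- Successor zone: intersect with the guard, reset, then let time elapse. -/
def zoneSucc {X : Type*} [DecidableEq X] (C : Set (X → ℝ)) (g : Zone X) (ρ : Finset X) :
    Set (X → ℝ) :=
  elapse (resetClocks (C ∩ { w | Zone.sat w g }) ρ)

/-- The probabilistic zone graph of an IPTA, as an IMDP whose states are pairs of a
location and a (semantic) zone, and whose actions are the edges of the IPTA. -/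
def IPTA.zoneGraph {A L X : Type*} [DecidableEq X] (IP : IPTA A L X (Zone X)) :
    IMDP (L × Set (X → ℝ)) (L × Zone X × A × IntervalDist (Finset X × L)) where
  init := (IP.init, elapse { w | ∀ x, w x = 0 })
  trans := { t | ∃ l C g a Υ, (l, g, a, Υ) ∈ IP.edges ∧ t.1 = (l, C) ∧
      t.2.1 = (l, g, a, Υ) ∧
      (∀ (ρ : Finset X) (l' : L), 0 < Υ.hi (ρ, l') →
        t.2.2.lo (l', zoneSucc C g ρ) = Υ.lo (ρ, l') ∧
        t.2.2.hi (l', zoneSucc C g ρ) = Υ.hi (ρ, l')) ∧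
      (∀ s' : L × Set (X → ℝ),
        (∀ (ρ : Finset X) (l' : L), 0 < Υ.hi (ρ, l') → s' ≠ (l', zoneSucc C g ρ)) →
        t.2.2.lo s' = 0 ∧ t.2.2.hi s' = 0) }

/-! ### Parametric zone graphs -/

/-- A (semantic) parametric zone: a set of pairs of a clock valuation and a parameter
valuation. -/
abbrev PZone (X P : Type*) := Set ((X → ℝ) × (P → ℝ))

/-- Time elapsing of a parametric zone (only clocks are delayed). -/
def pElapse {X P : Type*} (C : PZone X P) : PZone X P :=
  { wu | ∃ w u, (w, u) ∈ C ∧ ∃ d : ℝ, 0 ≤ d ∧ wu = (fun x => w x + d, u) }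

/-- Reset of a parametric zone. -/
def pReset {X P : Type*} [DecidableEq X] (C : PZone X P) (ρ : Finset X) : PZone X P :=
  { wu | ∃ w u, (w, u) ∈ C ∧ wu = (fun x => if x ∈ ρ then 0 else w x, u) }

/-- Satisfaction of a parametric guard atom by a clock and a parameter valuation. -/
def GuardAtom.psat {X P : Type*} (w : X → ℝ) (u : P → ℝ) : GuardAtom X P → Prop
  | .const x r k => r.holds (w x) (k : ℝ)
  | .param x r p => r.holds (w x) (u p)

/-- Satisfaction of a parametric guard. -/
def PGuard.psat {X P : Type*} (w : X → ℝ) (u : P → ℝ) (g : PGuard X P) : Prop :=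
  ∀ c ∈ g, c.psat w u

/-- The parametric zone associated with a guard. -/
def pGuardSet {X P : Type*} (g : PGuard X P) : PZone X P :=
  { wu | PGuard.psat wu.1 wu.2 g }

/-- Successor parametric zone. -/
def pZoneSucc {X P : Type*} [DecidableEq X] (C : PZone X P) (g : PGuard X P)
    (ρ : Finset X) : PZone X P :=
  pElapse (pReset (C ∩ pGuardSet g) ρ)

/-- The initial parametric zone: all clocks are `0`, parameters are nonnegative, and
time may elapse. -/
def pInitZone (X P : Type*) : PZone X P :=
  pElapse { wu | (∀ x, wu.1 x = 0) ∧ ∀ p, 0 ≤ wu.2 p }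

/-- The parametric probabilistic zone graph of a PIPTA, as an IMDP. -/
def PIPTA.pZoneGraph {A L X P : Type*} [DecidableEq X] (M : PIPTA A L X P) :
    IMDP (L × PZone X P) (EdgeT A L X P) where
  init := (M.init, pInitZone X P)
  trans := { t | ∃ l C g a Υ, (l, g, a, Υ) ∈ M.edges ∧ t.1 = (l, C) ∧
      t.2.1 = (l, g, a, Υ) ∧
      (∀ (ρ : Finset X) (l' : L), 0 < Υ.hi (ρ, l') →
        t.2.2.lo (l', pZoneSucc C g ρ) = Υ.lo (ρ, l') ∧
        t.2.2.hi (l', pZoneSucc C g ρ) = Υ.hi (ρ, l')) ∧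
      (∀ s' : L × PZone X P,
        (∀ (ρ : Finset X) (l' : L), 0 < Υ.hi (ρ, l') → s' ≠ (l', pZoneSucc C g ρ)) →
        t.2.2.lo s' = 0 ∧ t.2.2.hi s' = 0) }

/-- Symbolic runs in the parametric probabilistic zone graph along a list of
(edge, reset set, target location) choices. -/
def PIPTA.SymbSteps {A L X P : Type*} [DecidableEq X] (M : PIPTA A L X P) :
    L → PZone X P → List (EdgeT A L X P × Finset X × L) → L → PZone X P → Prop
  | l, C, [], lf, Cf => lf = l ∧ Cf = C
  | l, C, (e, ρ, l') :: rest, lf, Cf =>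
      e ∈ M.edges ∧ e.1 = l ∧ 0 < e.2.2.2.hi (ρ, l') ∧
      PIPTA.SymbSteps M l' (pZoneSucc C e.2.1 ρ) rest lf Cf

/-- A parameter valuation satisfies the projection of a parametric zone onto the
parameters. -/
def vSatZone {X P : Type*} (v : P → NNRat) (C : PZone X P) : Prop :=
  ∃ w : X → ℝ, (w, fun p => ((v p : ℚ) : ℝ)) ∈ C


/-!
Both directions go by induction along the run. The successor zone of `C` consists exactly of
the valuations obtained from a valuation of `C` satisfying the guard by resetting and letting
time elapse, so a concrete run stays inside the symbolic zones, and conversely a valuation of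
the last zone can be traced back step by step to a concrete run. In the backward direction the
delay ending each symbolic step is pushed into the next concrete delay, which lets the run start
from the zero valuation.
-/

abbrev realParams {P : Type*} (v : P → NNRat) : P → ℝ := fun p => ((v p : ℚ) : ℝ)

theorem VGuard.sat_map_val_iff {X P : Type*} (v : P → NNRat) (w : X → ℝ) (g : PGuard X P) :
    VGuard.sat w (g.map (GuardAtom.val v)) ↔ PGuard.psat w (realParams v) g := by
  simp only [VGuard.sat, PGuard.psat, List.forall_mem_map]
  refine forall₂_congr fun c _ => ?_
  cases c <;> rfl

section PZone

variable {X P : Type*}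

def PZone.DelayClosed (C : PZone X P) : Prop :=
  ∀ ⦃w u⦄ ⦃d : ℝ⦄, 0 ≤ d → (w, u) ∈ C → (fun x => w x + d, u) ∈ C

theorem mem_pElapse {S : PZone X P} {w : X → ℝ} {u : P → ℝ} :
    (w, u) ∈ pElapse S ↔ ∃ w', (w', u) ∈ S ∧ ∃ d : ℝ, 0 ≤ d ∧ w = fun x => w' x + d := by
  simp only [pElapse, Set.mem_ofPred_eq, Prod.mk.injEq]
  constructor
  · rintro ⟨w', u', hS, d, hd, rfl, rfl⟩
    exact ⟨w', hS, d, hd, rfl⟩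
  · rintro ⟨w', hS, d, hd, rfl⟩
    exact ⟨w', u, hS, d, hd, rfl, rfl⟩

theorem pElapse_delayClosed (S : PZone X P) : (pElapse S).DelayClosed := by
  intro w u d hd h
  obtain ⟨w', hS, d', hd', rfl⟩ := mem_pElapse.mp h
  exact mem_pElapse.mpr ⟨w', hS, d' + d, by positivity, by funext x; ring⟩

variable [DecidableEq X]

theorem mem_pReset {S : PZone X P} {ρ : Finset X} {w : X → ℝ} {u : P → ℝ} :
    (w, u) ∈ pReset S ρ ↔ ∃ w', (w', u) ∈ S ∧ w = fun x => if x ∈ ρ then 0 else w' x := by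
  simp only [pReset, Set.mem_ofPred_eq, Prod.mk.injEq]
  constructor
  · rintro ⟨w', u', hS, rfl, rfl⟩
    exact ⟨w', hS, rfl⟩
  · rintro ⟨w', hS, rfl⟩
    exact ⟨w', u, hS, rfl, rfl⟩

theorem mem_pZoneSucc {C : PZone X P} {g : PGuard X P} {ρ : Finset X} {w : X → ℝ}
    {u : P → ℝ} :
    (w, u) ∈ pZoneSucc C g ρ ↔ ∃ w', (w', u) ∈ C ∧ PGuard.psat w' u g ∧
      ∃ d : ℝ, 0 ≤ d ∧ w = fun x => (if x ∈ ρ then 0 else w' x) + d := by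
  simp only [pZoneSucc, mem_pElapse, mem_pReset]
  constructor
  · rintro ⟨_, ⟨w', ⟨hC, hg⟩, rfl⟩, d, hd, rfl⟩
    exact ⟨w', hC, hg, d, hd, rfl⟩
  · rintro ⟨w', hC, hg, d, hd, rfl⟩
    exact ⟨_, ⟨w', ⟨hC, hg⟩, rfl⟩, d, hd, rfl⟩

end PZone

namespace PIPTA

variable {A L X P : Type*} [DecidableEq X] {M : PIPTA A L X P} {v : P → NNRat}

theorem ConcSteps.of_delay {tr : List (EdgeT A L X P × Finset X × L)} {l lf : L}
    {w wf : X → ℝ} {t : ℝ} (ht : 0 ≤ t) (h : M.ConcSteps v l (fun x => w x + t) tr lf wf) :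
    ∃ wf', M.ConcSteps v l w tr lf wf' := by
  match tr, h with
  | [], ⟨hl, _⟩ => exact ⟨w, hl, rfl⟩
  | (_, ρ, _) :: _, ⟨he, hel, hhi, d, hd, hsat, hrest⟩ =>
    refine ⟨wf, he, hel, hhi, t + d, by positivity, ?_, ?_⟩
    · simpa only [add_assoc] using hsat
    · simpa only [add_assoc] using hrest

theorem ConcSteps.mem_of_symbSteps {tr : List (EdgeT A L X P × Finset X × L)} {l₀ l : L}
    {C₀ C : PZone X P} {w₀ wf : X → ℝ} (hs : M.SymbSteps l₀ C₀ tr l C)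
    (hc : M.ConcSteps v l₀ w₀ tr l wf) (hC₀ : C₀.DelayClosed) (hw₀ : (w₀, realParams v) ∈ C₀) :
    (wf, realParams v) ∈ C := by
  induction tr generalizing l₀ C₀ w₀ with
  | nil =>
    obtain ⟨-, rfl⟩ := hs
    obtain ⟨-, rfl⟩ := hc
    exact hw₀
  | cons step rest ih =>
    obtain ⟨e, ρ, l'⟩ := step
    obtain ⟨-, -, -, hs⟩ := hs
    obtain ⟨-, -, -, d, hd, hsat, hc⟩ := hc
    refine ih hs hc (pElapse_delayClosed _) (mem_pZoneSucc.mpr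
      ⟨_, hC₀ hd hw₀, (VGuard.sat_map_val_iff v _ _).mp hsat, 0, le_rfl, ?_⟩)
    simp only [add_zero]

theorem SymbSteps.exists_concSteps {tr : List (EdgeT A L X P × Finset X × L)} {l₀ l : L}
    {C₀ C : PZone X P} {w : X → ℝ} (hs : M.SymbSteps l₀ C₀ tr l C)
    (hw : (w, realParams v) ∈ C) :
    ∃ w₀, (w₀, realParams v) ∈ C₀ ∧ ∃ wf, M.ConcSteps v l₀ w₀ tr l wf := by
  induction tr generalizing l₀ C₀ with
  | nil =>
    obtain ⟨rfl, rfl⟩ := hs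
    exact ⟨w, hw, w, rfl, rfl⟩
  | cons step rest ih =>
    obtain ⟨e, ρ, l'⟩ := step
    obtain ⟨he, hel, hhi, hs⟩ := hs
    obtain ⟨w₁, hw₁, wf, hc⟩ := ih hs
    obtain ⟨w', hC₀, hg, d, hd, rfl⟩ := mem_pZoneSucc.mp hw₁
    obtain ⟨wf', hc'⟩ := hc.of_delay hd
    refine ⟨w', hC₀, wf', he, hel, hhi, 0, le_rfl, ?_, ?_⟩
    · simpa only [add_zero] using (VGuard.sat_map_val_iff v _ _).mpr hg
    · simpa only [add_zero] using hc'

end PIPTA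

/-- Correspondence between symbolic runs in the parametric
probabilistic zone graph and concrete runs: a symbolic run reaching `(l, C)` has an
equivalent concrete run (same locations and edges) under valuation `v` iff `v`
satisfies the projection of `C` onto the parameters. -/
theorem symbolic_concrete_correspondence {A L X P : Type*} [DecidableEq X]
    (M : PIPTA A L X P) (tr : List (EdgeT A L X P × Finset X × L)) (l : L)
    (C : PZone X P) (h : M.SymbSteps M.init (pInitZone X P) tr l C) (v : P → NNRat) :
    (∃ w, M.ConcSteps v M.init (fun _ => 0) tr l w) ↔ vSatZone v C := by
  constructor
  · rintro ⟨w, hc⟩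
    have h₀ : ((fun _ => 0), realParams v) ∈ pInitZone X P :=
      mem_pElapse.mpr ⟨_, ⟨fun _ => rfl, fun p => by positivity⟩, 0, le_rfl, by simp⟩
    exact ⟨w, hc.mem_of_symbSteps h (pElapse_delayClosed _) h₀⟩
  · rintro ⟨w, hw⟩
    obtain ⟨w₀, hw₀, wf, hc⟩ := h.exists_concSteps hw
    obtain ⟨z, ⟨hz, -⟩, d, hd, rfl⟩ := mem_pElapse.mp hw₀
    obtain rfl : z = fun _ => 0 := funext hz
    exact hc.of_delay hd

end
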